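/- For every element w of the free group F_2 on two generators a, b, one has E(Pal(w)) = Pal(E(w)), where E is the automorphism of F_2 exchanging a and b. -/

import Mathlib

namespace PalWord

/-- The free group on two generators `a`, `b`. -/
abbrev F : Type := FreeGroup Bool

/-- The first generator `a` of the free group `F`. -/
def a : F := FreeGroup.of false

/-- The second generator `b` of the free group `F`. -/
def b : F := FreeGroup.of true

/-- The automorphism `R_a` of `F`, with `a ↦ a`, `b ↦ b a`. -/
def Ra : MulAut F :=
  MonoidHom.toMulEquiv
    (FreeGroup.lift (fun x => if x then b * a else a))
    (FreeGroup.lift (fun x => if x then b * a⁻¹ else a))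
    (by ext x; cases x <;> simp [a, b])
    (by ext x; cases x <;> simp [a, b])

/-- The automorphism `R_b` of `F`, with `a ↦ a b`, `b ↦ b`. -/
def Rb : MulAut F :=
  MonoidHom.toMulEquiv
    (FreeGroup.lift (fun x => if x then b else a * b))
    (FreeGroup.lift (fun x => if x then b else a * b⁻¹))
    (by ext x; cases x <;> simp [a, b])
    (by ext x; cases x <;> simp [a, b])

/-- The homomorphism `w ↦ R_w` from `F` to `Aut(F)`, sending `a` to `R_a` and `b` to `R_b`. -/
def R : F →* MulAut F := FreeGroup.lift (fun x => if x then Rb else Ra)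

/-- The palindromization map `Pal(w) = (a b)⁻¹ · R_w(a b)`. -/
def Pal (w : F) : F := (a * b)⁻¹ * R w (a * b)

/-- The automorphism `E` of `F` exchanging `a` and `b`. -/
def E : MulAut F :=
  MonoidHom.toMulEquiv
    (FreeGroup.lift (fun x => FreeGroup.of !x))
    (FreeGroup.lift (fun x => FreeGroup.of !x))
    (by ext x; cases x <;> simp)
    (by ext x; cases x <;> simp)


/-!
Conjugation by the involution `E` exchanges `R_a` and `R_b`, so `R_{E w} = E R_w E`, and hence
`E (Pal w) = (b a)⁻¹ R_{E w} (b a)`. Both `R_a` and `R_b` fix the commutator `[b, a]`, so every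
`R_w` does; writing `b a = [b, a] a b` then turns the right-hand side into `Pal (E w)`.
-/

open scoped commutatorElement

@[simp] lemma E_of (x : Bool) : E (FreeGroup.of x) = FreeGroup.of !x := by
  simp [E, MonoidHom.toMulEquiv]

@[simp] lemma E_a : E a = b := E_of false

@[simp] lemma E_b : E b = a := E_of true

lemma E_mul_self : E * E = 1 :=
  MulEquiv.toMonoidHom_injective <| FreeGroup.ext_hom _ _ fun x => by simp

@[simp] lemma E_inv : E⁻¹ = E := inv_eq_of_mul_eq_one_right E_mul_self

@[simp] lemma Ra_a : Ra a = a := by simp [Ra, MonoidHom.toMulEquiv, a]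

@[simp] lemma Ra_b : Ra b = b * a := by simp [Ra, MonoidHom.toMulEquiv, b]

@[simp] lemma Rb_a : Rb a = a * b := by simp [Rb, MonoidHom.toMulEquiv, a]

@[simp] lemma Rb_b : Rb b = b := by simp [Rb, MonoidHom.toMulEquiv, b]

lemma conj_E_Ra : MulAut.conj E Ra = Rb := by
  refine MulEquiv.toMonoidHom_injective <| FreeGroup.ext_hom _ _ fun x => ?_
  cases x
  · change E (Ra (E⁻¹ a)) = Rb a
    simp
  · change E (Ra (E⁻¹ b)) = Rb b
    simp

lemma conj_E_Rb : MulAut.conj E Rb = Ra := by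
  rw [← conj_E_Ra, ← MulAut.mul_apply, ← map_mul, E_mul_self, map_one, MulAut.one_apply]

lemma R_E (w : F) : R (E w) = MulAut.conj E (R w) := by
  have hom_eq : R.comp E.toMonoidHom = (MulAut.conj E).toMonoidHom.comp R :=
    FreeGroup.ext_hom _ _ fun x => by
      cases x
      · simpa [R] using conj_E_Ra.symm
      · simpa [R] using conj_E_Rb.symm
  exact DFunLike.congr_fun hom_eq w

lemma R_apply_commutatorElement (w : F) : R w ⁅b, a⁆ = ⁅b, a⁆ := by
  have hrange : R.range ≤ MulAction.stabilizer (MulAut F) ⁅b, a⁆ := by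
    refine FreeGroup.range_lift_le ?_
    rintro _ ⟨x, rfl⟩
    cases x
    · change Ra ⁅b, a⁆ = ⁅b, a⁆
      simp only [commutatorElement_def, map_mul, map_inv, Ra_a, Ra_b]
      group
    · change Rb ⁅b, a⁆ = ⁅b, a⁆
      simp only [commutatorElement_def, map_mul, map_inv, Rb_a, Rb_b]
      group
  exact hrange ⟨w, rfl⟩

/-- The palindromization map commutes with the exchange automorphism `E`. -/
theorem E_Pal (w : F) : E (Pal w) = Pal (E w) := by
  have hba : b * a = ⁅b, a⁆ * (a * b) := by rw [commutatorElement_def]; group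
  calc E (Pal w) = (b * a)⁻¹ * E (R w (a * b)) := by simp [Pal]
    _ = (b * a)⁻¹ * R (E w) (b * a) := by simp [R_E, MulAut.conj_apply]
    _ = Pal (E w) := by
      rw [hba, map_mul, R_apply_commutatorElement, Pal, mul_inv_rev, ← mul_assoc,
        inv_mul_cancel_right]

end PalWord
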